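/- For any integer n ≥ 100 and m = ⌈√n⌉: E_{(n₁,…,n_m)∼μ_n^m}[ Σ_{i=1}^m n_i · log₂ n_i ] ≤ (1/2)·n·log₂ n + 4e·n. -/

import Mathlib

open Finset

/-- Pivot list: p₀ = 1, then the sorted pivots, then p_m = n+1. -/
def pivotList (n : ℕ) (P : Finset ℕ) : List ℕ :=
  1 :: (P.sort (· ≤ ·)) ++ [n + 1]

/-- The i-th gap (bucket size) nᵢ = pᵢ − pᵢ₋₁, for i = 1,…,m. -/
def gap (n : ℕ) (P : Finset ℕ) (i : ℕ) : ℕ :=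
  (pivotList n P).getD i 0 - (pivotList n P).getD (i - 1) 0

/-- Sample space of μ_n^m : all (m−1)-element subsets of {2,…,n}. -/
def pivotSets (n m : ℕ) : Finset (Finset ℕ) :=
  (Finset.Icc 2 n).powersetCard (m - 1)

/-!
Since `log (g / √n) ≤ g / √n`, every gap satisfies `g log₂ g ≤ ½ g log₂ n + g² / (√n ln 2)`,
so it suffices to bound the second moment `E[Σ nᵢ²]`. It counts the pairs `(x, y) ∈ [1, n]²`
lying in a common bucket, i.e. with no pivot in `(min x y, max x y]`. A pair at distance `d` is
in a common bucket for `C(n - 1 - d, m - 1)` of the `C(n - 1, m - 1)` pivot sets, and the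
hockey-stick identity gives `m · E[Σ nᵢ²] ≤ 2n²`. With `m ≥ √n` the error term is at most
`2n / ln 2 ≤ 4e · n`.
-/

/-- The bucket `[pᵢ₋₁, pᵢ)` consists of the `x ∈ [1, n]` with `pivotCount P x = i - 1`. -/
def pivotCount (P : Finset ℕ) (x : ℕ) : ℕ := #{p ∈ P | p ≤ x}

theorem List.Pairwise.getD_le_iff_lt_length_filter {α : Type*} [LinearOrder α] {s : List α}
    (hs : s.Pairwise (· ≤ ·)) {i : ℕ} (hi : i < s.length) (x d : α) :
    s.getD i d ≤ x ↔ i < (s.filter (· ≤ x)).length := by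
  induction s generalizing i with
  | nil => simp at hi
  | cons a t ih =>
    rw [List.pairwise_cons] at hs
    by_cases hax : a ≤ x
    · cases i with
      | zero => simp [hax]
      | succ j => simpa [List.filter_cons, hax] using ih hs.2 (by simpa using hi)
    · have hgt : ∀ b ∈ a :: t, x < b := by
        simp only [List.mem_cons, forall_eq_or_imp]
        exact ⟨not_le.1 hax, fun b hb => (not_le.1 hax).trans_le (hs.1 b hb)⟩
      have hmem : (a :: t).getD i d ∈ a :: t := by
        rw [List.getD_eq_getElem _ _ hi]; exact List.getElem_mem _
      rw [List.filter_eq_nil_iff.2 fun b hb => by simpa using hgt b hb]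
      simpa using hgt _ hmem

theorem pivotCount_le_card (P : Finset ℕ) (x : ℕ) : pivotCount P x ≤ #P := card_filter_le _ _

section PivotList

variable {n x : ℕ} {P : Finset ℕ}

theorem length_pivotList (n : ℕ) (P : Finset ℕ) : (pivotList n P).length = #P + 2 := by
  simp [pivotList]

theorem pivotList_pairwise_le (hP : P ⊆ Icc 2 n) : (pivotList n P).Pairwise (· ≤ ·) := by
  have hbounds : ∀ p ∈ P, 1 ≤ p ∧ p ≤ n + 1 := fun p hp => by
    have := mem_Icc.1 (hP hp); omega
  simp only [pivotList, List.cons_append, List.pairwise_cons, List.pairwise_append,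
    List.mem_append, List.mem_singleton, mem_sort]
  refine ⟨fun b hb => ?_, (sortedLT_sort P).pairwise.imp le_of_lt, by simp, fun a ha b hb => ?_⟩
  · rcases hb with hb | rfl
    exacts [(hbounds b hb).1, by omega]
  · exact hb ▸ (hbounds a ha).2

theorem mem_Icc_of_mem_pivotList (hP : P ⊆ Icc 2 n) {a : ℕ} (ha : a ∈ pivotList n P) :
    a ∈ Icc 1 (n + 1) := by
  simp only [pivotList, List.cons_append, List.mem_cons, List.mem_append, mem_sort,
    List.not_mem_nil, or_false] at ha
  rcases ha with rfl | hPa | rfl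
  · simp
  · have := mem_Icc.1 (hP hPa); rw [mem_Icc]; omega
  · simp

theorem length_filter_pivotList (hx : x ∈ Icc 1 n) :
    ((pivotList n P).filter (· ≤ x)).length = pivotCount P x + 1 := by
  have hsort : ((P.sort (· ≤ ·)).filter (· ≤ x)).length = pivotCount P x := by
    rw [pivotCount, card_def, filter_val, ← sort_eq P (· ≤ ·), Multiset.filter_coe]
    simp
  rw [mem_Icc] at hx
  simp [pivotList, hsort, hx.1, show ¬n + 1 ≤ x by omega]

theorem getD_pivotList_le_iff (hP : P ⊆ Icc 2 n) {j : ℕ} (hj : j ≤ #P + 1) (hx : x ∈ Icc 1 n) :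
    (pivotList n P).getD j 0 ≤ x ↔ j ≤ pivotCount P x := by
  rw [(pivotList_pairwise_le hP).getD_le_iff_lt_length_filter (by rw [length_pivotList]; omega),
    length_filter_pivotList hx]
  omega

end PivotList

theorem Finset.sum_card_fiberwise_sq {α β : Type*} [DecidableEq β] {f : α → β} {s : Finset α}
    {t : Finset β} (H : ∀ x ∈ s, f x ∈ t) :
    ∑ b ∈ t, #{x ∈ s | f x = b} ^ 2 = ∑ x ∈ s, #{y ∈ s | f y = f x} := by
  rw [← sum_fiberwise_of_maps_to' H (fun b => #{y ∈ s | f y = b})]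
  simp only [sum_const, smul_eq_mul, sq]

section Gaps

variable {n : ℕ} {P : Finset ℕ}

theorem filter_pivotCount_eq_Ico (hP : P ⊆ Icc 2 n) {i : ℕ} (hi : i ∈ Icc 1 (#P + 1)) :
    {x ∈ Icc 1 n | pivotCount P x + 1 = i} =
      Ico ((pivotList n P).getD (i - 1) 0) ((pivotList n P).getD i 0) := by
  have hi' := mem_Icc.1 hi
  have hbound : ∀ j ≤ #P + 1, (pivotList n P).getD j 0 ∈ Icc 1 (n + 1) := fun j hj => by
    have hj' : j < (pivotList n P).length := by rw [length_pivotList]; omega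
    rw [List.getD_eq_getElem _ _ hj']
    exact mem_Icc_of_mem_pivotList hP (List.getElem_mem hj')
  ext x
  rw [mem_filter, mem_Ico]
  constructor
  · rintro ⟨hx, hcount⟩
    exact ⟨(getD_pivotList_le_iff hP (by omega) hx).2 (by omega),
      not_le.1 fun h => by have := (getD_pivotList_le_iff hP hi'.2 hx).1 h; omega⟩
  · rintro ⟨hlo, hhi⟩
    have hx : x ∈ Icc 1 n := by
      have := mem_Icc.1 (hbound (i - 1) (by omega))
      have := mem_Icc.1 (hbound i hi'.2)
      rw [mem_Icc]; omega
    have := (getD_pivotList_le_iff hP (by omega) hx).1 hlo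
    have := mt (getD_pivotList_le_iff hP hi'.2 hx).2 (not_le.2 hhi)
    exact ⟨hx, by omega⟩

theorem card_filter_pivotCount_eq_gap (hP : P ⊆ Icc 2 n) {i : ℕ} (hi : i ∈ Icc 1 (#P + 1)) :
    #{x ∈ Icc 1 n | pivotCount P x + 1 = i} = gap n P i := by
  rw [filter_pivotCount_eq_Ico hP hi, Nat.card_Ico, gap]

theorem pivotCount_succ_mem_Icc (P : Finset ℕ) (x : ℕ) : pivotCount P x + 1 ∈ Icc 1 (#P + 1) := by
  have := pivotCount_le_card P x
  rw [mem_Icc]; omega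

theorem sum_gap (hP : P ⊆ Icc 2 n) : ∑ i ∈ Icc 1 (#P + 1), gap n P i = n := by
  rw [← sum_congr rfl fun i hi => card_filter_pivotCount_eq_gap hP hi,
    ← card_eq_sum_card_fiberwise fun x _ => pivotCount_succ_mem_Icc P x, Nat.card_Icc,
    Nat.add_sub_cancel]

theorem sum_gap_sq (hP : P ⊆ Icc 2 n) :
    ∑ i ∈ Icc 1 (#P + 1), gap n P i ^ 2 =
      ∑ x ∈ Icc 1 n, #{y ∈ Icc 1 n | pivotCount P y = pivotCount P x} := by
  calc ∑ i ∈ Icc 1 (#P + 1), gap n P i ^ 2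
      = ∑ i ∈ Icc 1 (#P + 1), #{x ∈ Icc 1 n | pivotCount P x + 1 = i} ^ 2 :=
        sum_congr rfl fun i hi => by rw [card_filter_pivotCount_eq_gap hP hi]
    _ = _ := by
        rw [sum_card_fiberwise_sq fun x _ => pivotCount_succ_mem_Icc P x]
        simp only [Nat.add_right_cancel_iff]

end Gaps

theorem pivotCount_eq_pivotCount_iff (P : Finset ℕ) (x y : ℕ) :
    pivotCount P y = pivotCount P x ↔ ∀ p ∈ P, (p ≤ y ↔ p ≤ x) := by
  rw [← filter_inj']
  refine ⟨fun h => ?_, fun h => by rw [pivotCount, pivotCount, h]⟩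
  rcases le_total x y with hxy | hyx
  · refine (eq_of_subset_of_card_le (fun p hp => ?_) h.le).symm
    rw [mem_filter] at hp ⊢
    exact ⟨hp.1, hp.2.trans hxy⟩
  · refine eq_of_subset_of_card_le (fun p hp => ?_) h.ge
    rw [mem_filter] at hp ⊢
    exact ⟨hp.1, hp.2.trans hyx⟩

theorem Finset.filter_powersetCard_forall {α : Type*} (s : Finset α) (k : ℕ) (q : α → Prop)
    [DecidablePred q] :
    {P ∈ s.powersetCard k | ∀ p ∈ P, q p} = (s.filter q).powersetCard k := by
  ext P
  simp only [mem_filter, mem_powersetCard, subset_iff]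
  grind

theorem card_pivotSets (n m : ℕ) : #(pivotSets n m) = (n - 1).choose (m - 1) := by
  rw [pivotSets, card_powersetCard, Nat.card_Icc, Nat.add_sub_add_right]

theorem card_filter_pivotSets_pivotCount_eq {n x y : ℕ} (m : ℕ) (hx : x ∈ Icc 1 n)
    (hy : y ∈ Icc 1 n) :
    #{P ∈ pivotSets n m | pivotCount P y = pivotCount P x} =
      (n - 1 - Nat.dist x y).choose (m - 1) := by
  rw [filter_congr fun P _ => pivotCount_eq_pivotCount_iff P x y, pivotSets,
    filter_powersetCard_forall, card_powersetCard]
  have hsep : #{p ∈ Icc 2 n | ¬(p ≤ y ↔ p ≤ x)} = Nat.dist x y := by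
    rw [show {p ∈ Icc 2 n | ¬(p ≤ y ↔ p ≤ x)} = Ioc (min x y) (max x y) by
      ext p; simp only [mem_filter, mem_Icc, mem_Ioc] at hx hy ⊢; omega, Nat.card_Ioc, Nat.dist]
    omega
  have := card_filter_add_card_filter_not (s := Icc 2 n) fun p => p ≤ y ↔ p ≤ x
  rw [Nat.card_Icc] at this
  congr 1
  omega

theorem sum_pivotSets_sum_gap_sq {n m : ℕ} (hm : 1 ≤ m) :
    ∑ P ∈ pivotSets n m, ∑ i ∈ Icc 1 m, gap n P i ^ 2 =
      ∑ x ∈ Icc 1 n, ∑ y ∈ Icc 1 n, (n - 1 - Nat.dist x y).choose (m - 1) := by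
  calc ∑ P ∈ pivotSets n m, ∑ i ∈ Icc 1 m, gap n P i ^ 2
      = ∑ P ∈ pivotSets n m, ∑ x ∈ Icc 1 n, ∑ y ∈ Icc 1 n,
          if pivotCount P y = pivotCount P x then 1 else 0 := sum_congr rfl fun P hP => by
        obtain ⟨hPsub, hPcard⟩ := mem_powersetCard.1 hP
        rw [show m = #P + 1 by omega, sum_gap_sq hPsub]
        simp only [card_filter]
    _ = ∑ x ∈ Icc 1 n, ∑ y ∈ Icc 1 n, ∑ P ∈ pivotSets n m,
          if pivotCount P y = pivotCount P x then 1 else 0 := by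
        rw [sum_comm]
        exact sum_congr rfl fun _ _ => sum_comm
    _ = _ := sum_congr rfl fun x hx => sum_congr rfl fun y hy => by
        rw [← card_filter, card_filter_pivotSets_pivotCount_eq m hx hy]

theorem Finset.sum_comp_le_sum_of_injOn {ι κ M : Type*} [AddCommMonoid M] [PartialOrder M]
    [CanonicallyOrderedAdd M] {s : Finset ι} {t : Finset κ} {g : ι → κ} (f : κ → M)
    (hg : Set.InjOn g s) (hst : ∀ i ∈ s, g i ∈ t) :
    ∑ i ∈ s, f (g i) ≤ ∑ j ∈ t, f j := by
  classical
  rw [← sum_image hg]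
  exact sum_le_sum_of_subset (image_subset_iff.2 hst)

theorem sum_Icc_dist_le (f : ℕ → ℕ) {n x : ℕ} (hx : x ∈ Icc 1 n) :
    ∑ y ∈ Icc 1 n, f (Nat.dist x y) ≤ 2 * ∑ d ∈ range n, f d := by
  rw [mem_Icc] at hx
  rw [← sum_filter_add_sum_filter_not _ (· ≤ x), two_mul]
  refine add_le_add (sum_comp_le_sum_of_injOn f ?_ ?_) (sum_comp_le_sum_of_injOn f ?_ ?_) <;>
    simp only [Set.InjOn, coe_filter, Set.mem_ofPred_eq, mem_filter, mem_Icc, mem_range,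
      Nat.dist] <;> omega

theorem sum_range_choose_eq_choose_succ (n k : ℕ) :
    ∑ j ∈ range n, j.choose k = n.choose (k + 1) := by
  induction n with
  | zero => simp
  | succ n ih => rw [sum_range_succ, ih, Nat.choose_succ_succ', add_comm]

theorem choose_mul_eq_mul_choose_pred (n : ℕ) {m : ℕ} (hm : 1 ≤ m) :
    n.choose m * m = n * (n - 1).choose (m - 1) := by
  obtain ⟨m, rfl⟩ : ∃ m', m = m' + 1 := ⟨m - 1, by omega⟩
  cases n with
  | zero => simp
  | succ n => simpa using (Nat.add_one_mul_choose_eq n m).symm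

theorem mul_sum_pivotSets_sum_gap_sq_le {n m : ℕ} (hm : 1 ≤ m) :
    m * ∑ P ∈ pivotSets n m, ∑ i ∈ Icc 1 m, gap n P i ^ 2 ≤ 2 * n ^ 2 * #(pivotSets n m) := by
  have hsum : ∑ P ∈ pivotSets n m, ∑ i ∈ Icc 1 m, gap n P i ^ 2 ≤ 2 * n * n.choose m := by
    rw [sum_pivotSets_sum_gap_sq hm]
    calc ∑ x ∈ Icc 1 n, ∑ y ∈ Icc 1 n, (n - 1 - Nat.dist x y).choose (m - 1)
        ≤ ∑ x ∈ Icc 1 n, 2 * ∑ d ∈ range n, (n - 1 - d).choose (m - 1) :=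
          sum_le_sum fun x hx => sum_Icc_dist_le (fun d => (n - 1 - d).choose (m - 1)) hx
      _ = 2 * n * n.choose m := by
          rw [sum_const, Nat.card_Icc, Nat.add_sub_cancel, smul_eq_mul,
            sum_range_reflect (fun j => j.choose (m - 1)) n, sum_range_choose_eq_choose_succ,
            Nat.sub_add_cancel hm]
          ring
  calc m * ∑ P ∈ pivotSets n m, ∑ i ∈ Icc 1 m, gap n P i ^ 2
      ≤ m * (2 * n * n.choose m) := Nat.mul_le_mul_left _ hsum
    _ = 2 * n * (n.choose m * m) := by ring
    _ = 2 * n ^ 2 * #(pivotSets n m) := by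
        rw [choose_mul_eq_mul_choose_pred n hm, card_pivotSets]; ring

theorem mul_log_le_mul_log_add_sq_div {g s : ℝ} (hg : 0 ≤ g) (hs : 0 < s) :
    g * Real.log g ≤ g * Real.log s + g ^ 2 / s := by
  rcases hg.eq_or_lt with rfl | hg
  · simp
  have hlog : Real.log g - Real.log s ≤ g / s := by
    rw [← Real.log_div hg.ne' hs.ne']
    linarith [Real.log_le_sub_one_of_pos (div_pos hg hs)]
  calc g * Real.log g = g * Real.log s + g * (Real.log g - Real.log s) := by ring
    _ ≤ g * Real.log s + g * (g / s) := by gcongr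
    _ = g * Real.log s + g ^ 2 / s := by ring

theorem sum_mul_logb_le {ι : Type*} (s : Finset ι) {g : ι → ℝ} (hg : ∀ i ∈ s, 0 ≤ g i) {t : ℝ}
    (ht : 0 < t) :
    ∑ i ∈ s, g i * Real.logb 2 (g i) ≤
      (∑ i ∈ s, g i) * Real.logb 2 t + (∑ i ∈ s, g i ^ 2) / (t * Real.log 2) := by
  have hlog2 : 0 < Real.log 2 := Real.log_pos one_lt_two
  calc ∑ i ∈ s, g i * Real.logb 2 (g i) = (∑ i ∈ s, g i * Real.log (g i)) / Real.log 2 := by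
        simp only [Real.logb, mul_div_assoc', sum_div]
    _ ≤ (∑ i ∈ s, (g i * Real.log t + g i ^ 2 / t)) / Real.log 2 := by
        gcongr with i hi
        exact mul_log_le_mul_log_add_sq_div (hg i hi) ht
    _ = _ := by
        rw [sum_add_distrib, ← sum_mul, ← sum_div, Real.logb]
        field_simp

theorem sum_gap_mul_logb_le {n : ℕ} (hn : 0 < n) {P : Finset ℕ} (hP : P ⊆ Icc 2 n) :
    ∑ i ∈ Icc 1 (#P + 1), (gap n P i : ℝ) * Real.logb 2 (gap n P i) ≤
      1 / 2 * n * Real.logb 2 n +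
        ((∑ i ∈ Icc 1 (#P + 1), gap n P i ^ 2 : ℕ) : ℝ) / (√n * Real.log 2) := by
  replace hn : (0 : ℝ) < n := Nat.cast_pos.2 hn
  have hlogb : Real.logb 2 √n = Real.logb 2 n / 2 := by
    rw [Real.logb, Real.log_sqrt hn.le, Real.logb]; ring
  have := sum_mul_logb_le (Icc 1 (#P + 1)) (g := fun i => (gap n P i : ℝ))
    (fun _ _ => Nat.cast_nonneg _) (Real.sqrt_pos.2 hn)
  rw [← Nat.cast_sum, sum_gap hP, hlogb] at this
  push_cast
  linarith

theorem sum_pivotSets_sum_gap_sq_le {n m : ℕ} (hn : 0 < n) (hm : √(n : ℝ) ≤ m) :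
    ((∑ P ∈ pivotSets n m, ∑ i ∈ Icc 1 m, gap n P i ^ 2 : ℕ) : ℝ) ≤
      2 * n * #(pivotSets n m) * √n := by
  have hsqrt : 0 < √(n : ℝ) := Real.sqrt_pos.2 (Nat.cast_pos.2 hn)
  have hsq : √(n : ℝ) * √n = n := Real.mul_self_sqrt (Nat.cast_nonneg n)
  have hmQ := mul_sum_pivotSets_sum_gap_sq_le (n := n) (Nat.cast_pos.1 (hsqrt.trans_le hm))
  refine le_of_mul_le_mul_left ?_ hsqrt
  calc √(n : ℝ) * ((∑ P ∈ pivotSets n m, ∑ i ∈ Icc 1 m, gap n P i ^ 2 : ℕ) : ℝ)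
      ≤ m * ((∑ P ∈ pivotSets n m, ∑ i ∈ Icc 1 m, gap n P i ^ 2 : ℕ) : ℝ) := by gcongr
    _ ≤ 2 * n ^ 2 * #(pivotSets n m) := by exact_mod_cast hmQ
    _ = √n * (2 * n * #(pivotSets n m) * √n) := by
        linear_combination (-2 * n * #(pivotSets n m) : ℝ) * hsq

theorem two_div_log_two_le_four_mul_exp_one : 2 / Real.log 2 ≤ 4 * Real.exp 1 := by
  rw [div_le_iff₀ (Real.log_pos one_lt_two)]
  nlinarith [Real.log_two_gt_d9, Real.exp_one_gt_d9]

theorem stmt_4 (n : ℕ) (hn : 100 ≤ n) (m : ℕ) (hm : m = ⌈Real.sqrt n⌉₊) :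
    (∑ P ∈ pivotSets n m, ∑ i ∈ Finset.Icc 1 m,
        (gap n P i : ℝ) * Real.logb 2 (gap n P i)) / (pivotSets n m).card
      ≤ (1 / 2) * n * Real.logb 2 n + 4 * Real.exp 1 * n := by
  have hn0 : 0 < n := by omega
  have hsqrt_le : √(n : ℝ) ≤ m := hm ▸ Nat.le_ceil _
  have hm1 : 1 ≤ m := Nat.cast_pos.1 ((Real.sqrt_pos.2 (Nat.cast_pos.2 hn0)).trans_le hsqrt_le)
  have hmn : m ≤ n := hm ▸ Nat.ceil_le.2 (Real.sqrt_le_self_iff.2 (Or.inr (by exact_mod_cast hn0)))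
  have hN : (0 : ℝ) < #(pivotSets n m) := by
    rw [Nat.cast_pos, card_pivotSets]; exact Nat.choose_pos (by omega)
  set N := #(pivotSets n m)
  rw [div_le_iff₀ hN]
  calc ∑ P ∈ pivotSets n m, ∑ i ∈ Icc 1 m, (gap n P i : ℝ) * Real.logb 2 (gap n P i)
      ≤ ∑ P ∈ pivotSets n m, (1 / 2 * n * Real.logb 2 n +
          ((∑ i ∈ Icc 1 m, gap n P i ^ 2 : ℕ) : ℝ) / (√n * Real.log 2)) :=
        sum_le_sum fun P hP => by
          obtain ⟨hPsub, hPcard⟩ := mem_powersetCard.1 hP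
          rw [show m = #P + 1 by omega]
          exact sum_gap_mul_logb_le hn0 hPsub
    _ = 1 / 2 * n * Real.logb 2 n * N +
          ((∑ P ∈ pivotSets n m, ∑ i ∈ Icc 1 m, gap n P i ^ 2 : ℕ) : ℝ) / √n / Real.log 2 := by
        rw [sum_add_distrib, sum_const, nsmul_eq_mul, ← sum_div, Nat.cast_sum, div_div]; ring
    _ ≤ 1 / 2 * n * Real.logb 2 n * N + 2 * n * N / Real.log 2 := by
        gcongr
        rw [div_le_iff₀ (by positivity)]
        exact sum_pivotSets_sum_gap_sq_le hn0 hsqrt_le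
    _ ≤ (1 / 2 * n * Real.logb 2 n + 4 * Real.exp 1 * n) * N := by
        linear_combination mul_le_mul_of_nonneg_right two_div_log_two_le_four_mul_exp_one
          (by positivity : (0 : ℝ) ≤ n * N)
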